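/- Every ideal of finite structures of signature μ that has the amalgamation property and has cardinality at most ℵ₁ is representable. -/

import Mathlib

/-- A relational structure of signature `μ : I → ℕ`. -/
structure RelStruct {I : Type} (μ : I → ℕ) : Type 1 where
  carrier : Type
  rel : ∀ i, (Fin (μ i) → carrier) → Prop

namespace RelStruct

variable {I : Type} {μ : I → ℕ}

/-- `f` is an embedding of relational structures. -/
def IsEmbedding (A B : RelStruct μ) (f : A.carrier → B.carrier) : Prop :=
  Function.Injective f ∧ ∀ i (x : Fin (μ i) → A.carrier), A.rel i x ↔ B.rel i (f ∘ x)

/-- `A` embeds into `B`. -/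
def Embeds (A B : RelStruct μ) : Prop := ∃ f, IsEmbedding A B f

/-- The age of `A`: (the isomorphism-closed set of) all finite structures embeddable in `A`,
i.e. isomorphic to a substructure of `A` induced on a finite subset. -/
def age (A : RelStruct μ) : Set (RelStruct μ) :=
  {B | Finite B.carrier ∧ Embeds B A}

/-- An ideal in the poset of isomorphism types of finite structures, encoded as an
isomorphism-closed set of finite structures which is nonempty, downward closed under
embeddability, and up-directed. -/
def IsIdeal (𝒜 : Set (RelStruct μ)) : Prop :=
  𝒜.Nonempty ∧ (∀ B ∈ 𝒜, Finite B.carrier) ∧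
  (∀ B C : RelStruct μ, Finite B.carrier → Embeds B C → C ∈ 𝒜 → B ∈ 𝒜) ∧
  (∀ B ∈ 𝒜, ∀ C ∈ 𝒜, ∃ D ∈ 𝒜, Embeds B D ∧ Embeds C D)

/-- Isomorphism of relational structures. -/
def Iso (A B : RelStruct μ) : Prop :=
  ∃ f : A.carrier ≃ B.carrier,
    ∀ i (x : Fin (μ i) → A.carrier), A.rel i x ↔ B.rel i (⇑f ∘ x)

/-- The number of isomorphism types of members of `𝒜`. -/
noncomputable def numTypes (𝒜 : Set (RelStruct μ)) : Cardinal :=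
  Cardinal.mk (Quot (fun A B : 𝒜 => Iso A.1 B.1))

/-- A class of structures has the amalgamation property. -/
def AmalgamationProperty (𝒞 : Set (RelStruct μ)) : Prop :=
  ∀ A A₁ A₂, A ∈ 𝒞 → A₁ ∈ 𝒞 → A₂ ∈ 𝒞 →
    ∀ (f₁ : A.carrier → A₁.carrier) (f₂ : A.carrier → A₂.carrier),
      IsEmbedding A A₁ f₁ → IsEmbedding A A₂ f₂ →
      ∃ B ∈ 𝒞, ∃ (g₁ : A₁.carrier → B.carrier) (g₂ : A₂.carrier → B.carrier),
        IsEmbedding A₁ B g₁ ∧ IsEmbedding A₂ B g₂ ∧ g₁ ∘ f₁ = g₂ ∘ f₂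

end RelStruct


/-!
Enumerate the isomorphism types of `𝒜` as `(B α)_{α < ω₁}` and build, inside the ambient set `ω₁`,
an increasing chain of countable structures `C α` with ages in `𝒜` such that `B α` embeds into
`C α`; the union of the chain then has age exactly `𝒜`. The stage `C α` extends the union `P` of
the earlier stages, which is countable because initial segments of `ω₁` are. To embed `B ∈ 𝒜` into
a countable extension of `P`, write `P` as an increasing union of finite substructures `P_n` and
amalgamate, over `P_n`, the finite structure built so far with `P_{n+1}`, starting from a joint
extension of `P_0` and `B`. The union of these finite amalgams receives both `P` and `B`; being
countable, it can be moved into `ω₁ \ P` so that it literally extends `P`.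
-/

open Set Function RelStruct

variable {I : Type} {μ : I → ℕ}

theorem exists_seq_of_forall_exists_next_stage {α : Type*} {p : ℕ → α → Prop} {r : ℕ → α → α → Prop}
    {a₀ : α} (h₀ : p 0 a₀) (h : ∀ n a, p n a → ∃ b, p (n + 1) b ∧ r n a b) :
    ∃ f : ℕ → α, f 0 = a₀ ∧ ∀ n, p n (f n) ∧ r n (f n) (f (n + 1)) := by
  choose! g hg using h
  let f : ℕ → α := fun n => Nat.rec a₀ g n
  have hp : ∀ n, p n (f n) := fun n => Nat.rec h₀ (fun n ih => (hg n _ ih).1) n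
  exact ⟨f, rfl, fun n => ⟨hp n, (hg n _ (hp n)).2⟩⟩

theorem exists_injective_of_countable {X Y : Type} [Countable X] [Infinite Y] :
    ∃ f : X → Y, Injective f :=
  let ⟨f, hf⟩ := Countable.exists_injective_nat X
  ⟨Infinite.natEmbedding Y ∘ f, (Infinite.natEmbedding Y).injective.comp hf⟩

theorem exists_injective_extend {V X : Type} [Countable X] {s : Set V} (hs : sᶜ.Infinite)
    {g : s → X} (hg : Injective g) : ∃ ρ : X → V, Injective ρ ∧ ∀ p, ρ (g p) = p := by
  have := hs.to_subtype
  obtain ⟨ν, hν⟩ := exists_injective_of_countable (X := X) (Y := ↥sᶜ)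
  refine ⟨extend g Subtype.val (Subtype.val ∘ ν), fun x y hxy => ?_, hg.extend_apply _ _⟩
  by_cases hx : ∃ p, g p = x <;> by_cases hy : ∃ p, g p = y
  · obtain ⟨p, rfl⟩ := hx
    obtain ⟨q, rfl⟩ := hy
    rw [hg.extend_apply, hg.extend_apply] at hxy
    rw [Subtype.ext hxy]
  · obtain ⟨p, rfl⟩ := hx
    rw [hg.extend_apply, extend_apply' _ _ _ hy, comp_apply] at hxy
    exact ((ν y).2 (hxy ▸ p.2)).elim
  · obtain ⟨q, rfl⟩ := hy
    rw [hg.extend_apply, extend_apply' _ _ _ hx, comp_apply] at hxy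
    exact ((ν x).2 (hxy ▸ q.2)).elim
  · rw [extend_apply' _ _ _ hx, extend_apply' _ _ _ hy] at hxy
    exact hν (Subtype.ext hxy)

namespace RelStruct

variable {A B C : RelStruct μ} {𝒜 : Set (RelStruct μ)}

theorem IsEmbedding.comp {f : A.carrier → B.carrier} {g : B.carrier → C.carrier}
    (hg : IsEmbedding B C g) (hf : IsEmbedding A B f) : IsEmbedding A C (g ∘ f) :=
  ⟨hg.1.comp hf.1, fun i x => (hf.2 i x).trans (hg.2 i (f ∘ x))⟩

theorem Embeds.trans (hAB : Embeds A B) (hBC : Embeds B C) : Embeds A C :=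
  let ⟨f, hf⟩ := hAB
  let ⟨g, hg⟩ := hBC
  ⟨g ∘ f, hg.comp hf⟩

theorem Embeds.age_subset (h : Embeds A B) : age A ⊆ age B :=
  fun _ ⟨hC, hCA⟩ => ⟨hC, hCA.trans h⟩

theorem IsEmbedding.iso_of_surjective {f : A.carrier → B.carrier} (hf : IsEmbedding A B f)
    (hs : Surjective f) : Iso A B :=
  ⟨Equiv.ofBijective f ⟨hf.1, hs⟩, hf.2⟩

theorem Iso.embeds (h : Iso A B) : Embeds A B :=
  let ⟨f, hf⟩ := h
  ⟨f, f.injective, hf⟩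

theorem Iso.refl (A : RelStruct μ) : Iso A A :=
  ⟨Equiv.refl _, fun _ _ => Iff.rfl⟩

theorem Iso.symm (h : Iso A B) : Iso B A := by
  obtain ⟨f, hf⟩ := h
  refine ⟨f.symm, fun i x => ?_⟩
  rw [hf i (f.symm ∘ x), ← comp_assoc, f.self_comp_symm, id_comp]

theorem Iso.trans (hAB : Iso A B) (hBC : Iso B C) : Iso A C :=
  let ⟨f, hf⟩ := hAB
  let ⟨g, hg⟩ := hBC
  ⟨f.trans g, fun i x => (hf i x).trans (hg i (f ∘ x))⟩

theorem IsIdeal.mem_of_embeds (h𝒜 : IsIdeal 𝒜) [Finite A.carrier] (hAB : Embeds A B)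
    (hB : B ∈ 𝒜) : A ∈ 𝒜 :=
  h𝒜.2.2.1 A B ‹_› hAB hB

theorem IsIdeal.mem_of_iso (h𝒜 : IsIdeal 𝒜) (hB : B ∈ 𝒜) (hAB : Iso A B) : A ∈ 𝒜 :=
  have := h𝒜.2.1 B hB
  have := Finite.of_equiv _ hAB.choose.symm
  h𝒜.mem_of_embeds hAB.embeds hB

theorem IsIdeal.age_subset (h𝒜 : IsIdeal 𝒜) (hA : A ∈ 𝒜) : age A ⊆ 𝒜 :=
  fun _ ⟨_, hBA⟩ => h𝒜.mem_of_embeds hBA hA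

def induce (A : RelStruct μ) (s : Set A.carrier) : RelStruct μ :=
  ⟨s, fun i x => A.rel i (Subtype.val ∘ x)⟩

theorem isEmbedding_inclusion {s t : Set A.carrier} (h : s ⊆ t) :
    IsEmbedding (A.induce s) (A.induce t) (inclusion h) :=
  ⟨inclusion_injective h, fun _ _ => Iff.rfl⟩

theorem induce_mem_of_age_subset (hA : age A ⊆ 𝒜) {s : Set A.carrier} (hs : s.Finite) :
    A.induce s ∈ 𝒜 :=
  hA ⟨hs.to_subtype, Subtype.val, Subtype.val_injective, fun _ _ => Iff.rfl⟩

theorem exists_enum_of_numTypes_le {T : Type} (hne : 𝒜.Nonempty)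
    (hT : numTypes 𝒜 ≤ Cardinal.lift.{1} (Cardinal.mk T)) :
    ∃ B : T → RelStruct μ, (∀ t, B t ∈ 𝒜) ∧ ∀ A ∈ 𝒜, ∃ t, Iso A (B t) := by
  obtain ⟨j⟩ := Cardinal.lift_mk_le'.1 ((Cardinal.lift_uzero _).trans_le hT)
  have : Nonempty (Quot fun A B : 𝒜 => Iso A.1 B.1) := hne.to_subtype.map (Quot.mk _)
  refine ⟨fun t => (invFun j t).out.1, fun t => (invFun j t).out.2,
    fun A hA => ⟨j (Quot.mk _ ⟨A, hA⟩), ?_⟩⟩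
  have hiso : Equivalence fun A B : 𝒜 => Iso A.1 B.1 := ⟨fun _ => .refl _, .symm, .trans⟩
  dsimp only
  rw [leftInverse_invFun j.injective]
  exact (hiso.eqvGen_iff.1 (Quot.eqvGen_exact (Quot.out_eq (Quot.mk _ ⟨A, hA⟩)))).symm

end RelStruct

/-- A relational structure whose domain is a subset of the ambient type `V`: inside a fixed
ambient type, chains of extensions are chains of literal inclusions, glued by unions. -/
structure PartialStruct {I : Type} (μ : I → ℕ) (V : Type) where
  carrier : Set V
  rel : ∀ i, (Fin (μ i) → V) → Prop
  mem_carrier_of_rel : ∀ {i x}, rel i x → ∀ k, x k ∈ carrier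

namespace PartialStruct

variable {V : Type} {𝒜 : Set (RelStruct μ)}

def toRelStruct (P : PartialStruct μ V) : RelStruct μ :=
  ⟨P.carrier, fun i x => P.rel i (Subtype.val ∘ x)⟩

instance : Preorder (PartialStruct μ V) where
  le P Q := P.carrier ⊆ Q.carrier ∧
    ∀ i (x : Fin (μ i) → V), (∀ k, x k ∈ P.carrier) → (P.rel i x ↔ Q.rel i x)
  le_refl _ := ⟨subset_rfl, fun _ _ _ => Iff.rfl⟩
  le_trans _ _ _ hPQ hQR :=
    ⟨hPQ.1.trans hQR.1, fun i x hx => (hPQ.2 i x hx).trans (hQR.2 i x fun k => hPQ.1 (hx k))⟩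

theorem embeds_of_le {P Q : PartialStruct μ V} (h : P ≤ Q) :
    Embeds P.toRelStruct Q.toRelStruct :=
  ⟨inclusion h.1, inclusion_injective h.1, fun i x => h.2 i _ fun k => (x k).2⟩

section iUnion

variable {ι : Type} {K : ι → PartialStruct μ V}

def iUnion (K : ι → PartialStruct μ V) : PartialStruct μ V where
  carrier := ⋃ j, (K j).carrier
  rel i x := ∃ j, (K j).rel i x
  mem_carrier_of_rel := fun ⟨j, hj⟩ k => mem_iUnion.2 ⟨j, (K j).mem_carrier_of_rel hj k⟩

theorem le_iUnion (hK : Directed (· ≤ ·) K) (a : ι) : K a ≤ iUnion K := by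
  refine ⟨subset_iUnion (fun j => (K j).carrier) a, fun i x hx => ⟨fun h => ⟨a, h⟩, ?_⟩⟩
  rintro ⟨b, hb⟩
  obtain ⟨c, hac, hbc⟩ := hK a b
  exact (hac.2 i x hx).2 ((hbc.2 i x ((K b).mem_carrier_of_rel hb)).1 hb)

theorem exists_embeds_of_embeds_iUnion [Nonempty ι] (hK : Directed (· ≤ ·) K)
    {B : RelStruct μ} [Finite B.carrier] (hB : Embeds B (iUnion K).toRelStruct) :
    ∃ a, Embeds B (K a).toRelStruct := by
  obtain ⟨f, hf⟩ := hB
  have hfin := finite_range (Subtype.val ∘ f)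
  obtain ⟨a, ha⟩ := (hK.mono_comp _ fun _ _ h => h.1).exists_mem_subset_of_finset_subset_biUnion
    (s := hfin.toFinset) (by rw [hfin.coe_toFinset]; exact range_subset_iff.2 fun b => (f b).2)
  rw [hfin.coe_toFinset] at ha
  refine ⟨a, fun b => ⟨(f b).1, ha (mem_range_self b)⟩,
    fun b b' h => hf.1 (Subtype.ext (congrArg Subtype.val h :)), fun i x => ?_⟩
  exact (hf.2 i x).trans ((le_iUnion hK a).2 i _ fun k => ha (mem_range_self (x k))).symm

theorem age_iUnion_subset [Nonempty ι] (hK : Directed (· ≤ ·) K)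
    (h : ∀ a, age (K a).toRelStruct ⊆ 𝒜) : age (iUnion K).toRelStruct ⊆ 𝒜 := by
  rintro B ⟨hB, hBK⟩
  obtain ⟨a, ha⟩ := exists_embeds_of_embeds_iUnion hK hBK
  exact h a ⟨hB, ha⟩

end iUnion

section map

variable {W : RelStruct μ} {ρ : W.carrier → V}

def map (W : RelStruct μ) (ρ : W.carrier → V) : PartialStruct μ V where
  carrier := range ρ
  rel i x := ∃ y, ρ ∘ y = x ∧ W.rel i y
  mem_carrier_of_rel := by
    rintro i _ ⟨y, rfl, -⟩ k
    exact mem_range_self (y k)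

theorem isEmbedding_map (hρ : Injective ρ) :
    IsEmbedding W (map W ρ).toRelStruct (rangeFactorization ρ) :=
  ⟨rangeFactorization_injective.2 hρ,
    fun _ x => ⟨fun h => ⟨x, rfl, h⟩, fun ⟨_, hy, h⟩ => hρ.comp_left hy ▸ h⟩⟩

theorem iso_map (hρ : Injective ρ) : Iso W (map W ρ).toRelStruct :=
  (isEmbedding_map hρ).iso_of_surjective rangeFactorization_surjective

theorem le_map {P : PartialStruct μ V} {g : P.carrier → W.carrier}
    (hg : IsEmbedding P.toRelStruct W g) (hρ : Injective ρ) (hρg : ∀ p, ρ (g p) = p) :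
    P ≤ map W ρ := by
  refine ⟨fun p hp => ⟨g ⟨p, hp⟩, hρg _⟩, fun i x hx => ?_⟩
  let y : Fin (μ i) → P.carrier := fun k => ⟨x k, hx k⟩
  have hy : ρ ∘ g ∘ y = x := funext fun k => hρg (y k)
  refine ⟨fun h => ⟨g ∘ y, hy, (hg.2 i y).1 h⟩, fun ⟨z, hz, h⟩ => (hg.2 i y).2 ?_⟩
  exact hρ.comp_left (hz.trans hy.symm) ▸ h

end map

section embeddingOn

variable {A : RelStruct μ} {s t : Set A.carrier} {Q : PartialStruct μ V} {h : A.carrier → V}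

def IsEmbeddingOn (A : RelStruct μ) (s : Set A.carrier) (Q : PartialStruct μ V)
    (h : A.carrier → V) : Prop :=
  MapsTo h s Q.carrier ∧ InjOn h s ∧
    ∀ i (x : Fin (μ i) → A.carrier), (∀ k, x k ∈ s) → (A.rel i x ↔ Q.rel i (h ∘ x))

theorem IsEmbeddingOn.isEmbedding (hh : IsEmbeddingOn A s Q h) :
    IsEmbedding (A.induce s) Q.toRelStruct (hh.1.restrict h s Q.carrier) :=
  ⟨hh.1.restrict_inj.2 hh.2.1, fun i x => hh.2.2 i _ fun k => (x k).2⟩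

theorem exists_isEmbeddingOn_of_isEmbedding [Nonempty V] {e : s → Q.carrier}
    (he : IsEmbedding (A.induce s) Q.toRelStruct e) :
    ∃ h : A.carrier → V, IsEmbeddingOn A s Q h ∧ ∀ a : s, h a = e a := by
  let h := extend Subtype.val (Subtype.val ∘ e) fun _ => Classical.arbitrary V
  have hh : ∀ a (ha : a ∈ s), h a = e ⟨a, ha⟩ := fun a ha =>
    Subtype.val_injective.extend_apply _ _ (⟨a, ha⟩ : s)
  refine ⟨h, ⟨fun a ha => ?_, fun a ha b hb hab => ?_, fun i x hx => ?_⟩, fun a => hh a a.2⟩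
  · rw [hh a ha]
    exact (e _).2
  · rw [hh a ha, hh b hb] at hab
    exact congrArg Subtype.val (he.1 (Subtype.ext hab))
  · have hx' : h ∘ x = Subtype.val ∘ e ∘ fun k => ⟨x k, hx k⟩ := funext fun k => hh _ (hx k)
    rw [hx']
    exact he.2 i fun k => ⟨x k, hx k⟩

theorem embeds_iUnion_of_isEmbeddingOn {D : ℕ → Set A.carrier} (hD : Monotone D)
    (hDA : ∀ a, ∃ n, a ∈ D n) {Q : ℕ → PartialStruct μ V} (hQ : Monotone Q)
    {h : ℕ → A.carrier → V} (hh : ∀ n, IsEmbeddingOn A (D n) (Q n) (h n))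
    (hcompat : ∀ n, EqOn (h (n + 1)) (h n) (D n)) : Embeds A (iUnion Q).toRelStruct := by
  have hstable : ∀ {m n}, m ≤ n → EqOn (h n) (h m) (D m) := by
    intro m n hmn
    induction n, hmn using Nat.le_induction with
    | base => exact eqOn_refl _ _
    | succ n hmn ih => exact fun a ha => (hcompat n (hD hmn ha)).trans (ih ha)
  choose N hN using hDA
  -- the maps `h n` stabilise on each `D m`, and `φ` is their limit
  let φ a := h (N a) a
  have hφ : ∀ n, EqOn φ (h n) (D n) := fun n a ha =>
    (hstable (le_max_left (N a) n) (hN a)).symm.trans (hstable (le_max_right _ _) ha)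
  refine ⟨fun a => ⟨φ a, mem_iUnion.2 ⟨N a, (hh (N a)).1 (hN a)⟩⟩, fun a b hab => ?_, fun i x => ?_⟩
  · have ha := hD (le_max_left (N a) (N b)) (hN a)
    have hb := hD (le_max_right (N a) (N b)) (hN b)
    refine (hh _).2.1 ha hb ?_
    rw [← hφ _ ha, ← hφ _ hb]
    exact congrArg Subtype.val hab
  · obtain ⟨n, hn⟩ := Finite.exists_le (N ∘ x)
    have hx : ∀ k, x k ∈ D n := fun k => hD (hn k) (hN _)
    show A.rel i x ↔ (iUnion Q).rel i (φ ∘ x)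
    rw [show φ ∘ x = h n ∘ x from funext fun k => hφ n (hx k)]
    exact ((hh n).2.2 i x hx).trans ((le_iUnion hQ.directed_le n).2 i _ fun k => (hh n).1 (hx k))

theorem exists_isEmbeddingOn_and_embeds [Infinite V] (h𝒜 : IsIdeal 𝒜) (hA : age A ⊆ 𝒜)
    (hs : s.Finite) {B : RelStruct μ} (hB : B ∈ 𝒜) :
    ∃ (Q : PartialStruct μ V) (h : A.carrier → V), Q.carrier.Finite ∧ Q.toRelStruct ∈ 𝒜 ∧
      IsEmbeddingOn A s Q h ∧ Embeds B Q.toRelStruct := by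
  obtain ⟨E, hE, ⟨e, he⟩, hBE⟩ := h𝒜.2.2.2 _ (induce_mem_of_age_subset hA hs) B hB
  have := h𝒜.2.1 E hE
  obtain ⟨ρ, hρ⟩ := exists_injective_of_countable (X := E.carrier) (Y := V)
  obtain ⟨h, hh, -⟩ := exists_isEmbeddingOn_of_isEmbedding ((isEmbedding_map hρ).comp he)
  exact ⟨map E ρ, h, finite_range ρ, h𝒜.mem_of_iso hE (iso_map hρ).symm, hh,
    hBE.trans (iso_map hρ).embeds⟩

theorem exists_isEmbeddingOn_extension [Infinite V] (h𝒜 : IsIdeal 𝒜)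
    (hAP : AmalgamationProperty 𝒜) (hA : age A ⊆ 𝒜) (hst : s ⊆ t) (ht : t.Finite)
    (hQfin : Q.carrier.Finite) (hQ : Q.toRelStruct ∈ 𝒜) (hh : IsEmbeddingOn A s Q h) :
    ∃ (Q' : PartialStruct μ V) (h' : A.carrier → V), Q'.carrier.Finite ∧ Q'.toRelStruct ∈ 𝒜 ∧
      IsEmbeddingOn A t Q' h' ∧ Q ≤ Q' ∧ EqOn h' h s := by
  -- amalgamate `Q` and `A.induce t` over `A.induce s`, then place the amalgam in `V` fixing `Q`
  obtain ⟨W, hW, g₁, g₂, hg₁, hg₂, hcomm⟩ := hAP _ _ _ (induce_mem_of_age_subset hA (ht.subset hst))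
    (induce_mem_of_age_subset hA ht) hQ _ _ (isEmbedding_inclusion hst) hh.isEmbedding
  have := h𝒜.2.1 W hW
  obtain ⟨ρ, hρ, hρg⟩ := exists_injective_extend hQfin.infinite_compl hg₂.1
  obtain ⟨h', hh', hh'g⟩ := exists_isEmbeddingOn_of_isEmbedding ((isEmbedding_map hρ).comp hg₁)
  refine ⟨map W ρ, h', finite_range ρ, h𝒜.mem_of_iso hW (iso_map hρ).symm, hh',
    le_map hg₂ hρ hρg, fun a ha => ?_⟩
  rw [hh'g ⟨a, hst ha⟩]
  exact (congrArg ρ (congrFun hcomm ⟨a, ha⟩)).trans (hρg _)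

end embeddingOn

end PartialStruct

open PartialStruct

variable {𝒜 : Set (RelStruct μ)}

theorem exists_joint_embedding_of_countable (h𝒜 : IsIdeal 𝒜) (hAP : AmalgamationProperty 𝒜)
    {A : RelStruct μ} [Countable A.carrier] (hA : age A ⊆ 𝒜) {B : RelStruct μ} (hB : B ∈ 𝒜) :
    ∃ M : RelStruct μ, Countable M.carrier ∧ age M ⊆ 𝒜 ∧ Embeds A M ∧ Embeds B M := by
  obtain ⟨f, hf⟩ := Countable.exists_injective_nat A.carrier
  let D : ℕ → Set A.carrier := fun n => f ⁻¹' Iio n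
  have hD : Monotone D := fun m n hmn => preimage_mono (Iio_subset_Iio hmn)
  have hDfin : ∀ n, (D n).Finite := fun n => (finite_Iio n).preimage hf.injOn
  obtain ⟨Q₀, h₀, hQ₀fin, hQ₀, hh₀, hBQ₀⟩ := exists_isEmbeddingOn_and_embeds (V := ℕ) h𝒜 hA (hDfin 0) hB
  obtain ⟨c, hc₀, hc⟩ := exists_seq_of_forall_exists_next_stage (a₀ := (Q₀, h₀))
    (p := fun n c => c.1.carrier.Finite ∧ c.1.toRelStruct ∈ 𝒜 ∧ IsEmbeddingOn A (D n) c.1 c.2)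
    (r := fun n c c' => c.1 ≤ c'.1 ∧ EqOn c'.2 c.2 (D n)) ⟨hQ₀fin, hQ₀, hh₀⟩
    fun n c ⟨hfin, hmem, hh⟩ =>
      let ⟨Q', h', hfin', hmem', hh', hle, heq⟩ :=
        exists_isEmbeddingOn_extension h𝒜 hAP hA (hD n.le_succ) (hDfin _) hfin hmem hh
      ⟨(Q', h'), ⟨hfin', hmem', hh'⟩, hle, heq⟩
  have hQ : Monotone fun n => (c n).1 := monotone_nat_of_le_succ fun n => (hc n).2.1
  refine ⟨(iUnion fun n => (c n).1).toRelStruct, Subtype.countable,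
    age_iUnion_subset hQ.directed_le fun n => h𝒜.age_subset (hc n).1.2.1,
    embeds_iUnion_of_isEmbeddingOn hD (fun a => ⟨f a + 1, Nat.lt_succ_self _⟩) hQ
      (fun n => (hc n).1.2.2) (fun n => (hc n).2.2), hBQ₀.trans ?_⟩
  simpa [hc₀] using embeds_of_le (le_iUnion hQ.directed_le 0)

theorem exists_le_iso_of_embeds {V : Type} {P : PartialStruct μ V} (hP : P.carrierᶜ.Infinite)
    {M : RelStruct μ} [Countable M.carrier] (hPM : Embeds P.toRelStruct M) :
    ∃ Q, P ≤ Q ∧ Iso M Q.toRelStruct :=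
  let ⟨_, hg⟩ := hPM
  let ⟨ρ, hρ, hρg⟩ := exists_injective_extend hP hg.1
  ⟨map M ρ, le_map hg hρ hρg, iso_map hρ⟩

def CountableWithAgeIn {V : Type} (𝒜 : Set (RelStruct μ)) (P : PartialStruct μ V) : Prop :=
  P.carrier.Countable ∧ age P.toRelStruct ⊆ 𝒜

section uncountable

variable {V : Type} [Uncountable V]

theorem exists_le_embeds (h𝒜 : IsIdeal 𝒜) (hAP : AmalgamationProperty 𝒜)
    {P : PartialStruct μ V} (hP : CountableWithAgeIn 𝒜 P)
    {B : RelStruct μ} (hB : B ∈ 𝒜) :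
    ∃ Q, P ≤ Q ∧ CountableWithAgeIn 𝒜 Q ∧ Embeds B Q.toRelStruct := by
  have : Countable P.toRelStruct.carrier := hP.1.to_subtype
  obtain ⟨M, _, hM, hPM, hBM⟩ := exists_joint_embedding_of_countable h𝒜 hAP hP.2 hB
  have hPc : P.carrierᶜ.Infinite := fun hfin =>
    not_countable_univ (by simpa using hP.1.union hfin.countable)
  obtain ⟨Q, hPQ, hMQ⟩ := exists_le_iso_of_embeds hPc hPM
  exact ⟨Q, hPQ, ⟨countable_coe_iff.1 (Countable.of_equiv _ hMQ.choose),
    hMQ.symm.embeds.age_subset.trans hM⟩, hBM.trans hMQ.embeds⟩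

/-- The union below the first stage of a chain is empty, and its nullary relations need not match
`𝒜`; so the next stage is only required to extend `P` when `P` is a legitimate stage. -/
theorem exists_next_stage (h𝒜 : IsIdeal 𝒜) (hAP : AmalgamationProperty 𝒜) (P : PartialStruct μ V)
    {B : RelStruct μ} (hB : B ∈ 𝒜) :
    ∃ Q, (CountableWithAgeIn 𝒜 P → P ≤ Q) ∧ CountableWithAgeIn 𝒜 Q ∧ Embeds B Q.toRelStruct := by
  by_cases hP : CountableWithAgeIn 𝒜 P
  · obtain ⟨Q, hPQ, hQ, hBQ⟩ := exists_le_embeds h𝒜 hAP hP hB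
    exact ⟨Q, fun _ => hPQ, hQ, hBQ⟩
  · have := h𝒜.2.1 B hB
    obtain ⟨ρ, hρ⟩ := exists_injective_of_countable (X := B.carrier) (Y := V)
    exact ⟨map B ρ, fun h => (hP h).elim,
      ⟨countable_range ρ, (iso_map hρ).symm.embeds.age_subset.trans (h𝒜.age_subset hB)⟩,
      (iso_map hρ).embeds⟩

theorem exists_monotone_chain {ι : Type} [LinearOrder ι] [WellFoundedLT ι]
    (hι : ∀ α : ι, (Iio α).Countable) (h𝒜 : IsIdeal 𝒜) (hAP : AmalgamationProperty 𝒜)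
    {B : ι → RelStruct μ} (hB : ∀ α, B α ∈ 𝒜) :
    ∃ C : ι → PartialStruct μ V, Monotone C ∧ (∀ α, age (C α).toRelStruct ⊆ 𝒜) ∧
      ∀ α, Embeds (B α) (C α).toRelStruct := by
  choose next hnext using fun (P : PartialStruct μ V) α => exists_next_stage h𝒜 hAP P (hB α)
  let C : ι → PartialStruct μ V :=
    WellFoundedLT.fix fun α C => next (iUnion fun β : Iio α => C β β.2) α
  have hC : ∀ α, C α = next (iUnion fun β : Iio α => C β) α := WellFoundedLT.fix_eq _
  have hchain : ∀ α, CountableWithAgeIn 𝒜 (C α) ∧ ∀ β < α, C β ≤ C α := by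
    intro α
    induction α using WellFoundedLT.induction with
    | _ α ih =>
      rw [hC]
      refine ⟨(hnext _ α).2.1, fun β hβ => ?_⟩
      have hmono : Monotone fun γ : Iio α => C γ := fun γ δ hγδ =>
        hγδ.eq_or_lt.elim (fun h => h ▸ le_rfl) fun h => (ih δ δ.2).2 γ h
      have : Nonempty (Iio α) := ⟨⟨β, hβ⟩⟩
      have : Countable (Iio α) := (hι α).to_subtype
      have hU : CountableWithAgeIn 𝒜 (iUnion fun γ : Iio α => C γ) :=
        ⟨countable_iUnion fun γ => (ih γ γ.2).1.1,
          age_iUnion_subset hmono.directed_le fun γ => (ih γ γ.2).1.2⟩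
      exact (le_iUnion hmono.directed_le ⟨β, hβ⟩).trans ((hnext _ α).1 hU)
  refine ⟨C, fun β α hβα => ?_, fun α => (hchain α).1.2, fun α => hC α ▸ (hnext _ α).2.2⟩
  exact hβα.eq_or_lt.elim (fun h => h ▸ le_rfl) fun h => (hchain α).2 β h

end uncountable

instance : Uncountable (Cardinal.aleph 1).ord.ToType := by
  rw [← Cardinal.aleph0_lt_mk_iff, Cardinal.mk_toType, Cardinal.card_ord]
  exact Cardinal.aleph0_lt_aleph_one

theorem countable_Iio_toType_ord_aleph_one (α : (Cardinal.aleph 1).ord.ToType) :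
    (Iio α).Countable :=
  Cardinal.le_aleph0_iff_set_countable.1 <| Cardinal.lt_aleph_one_iff.1 <| by
    simpa using Cardinal.mk_Iio_lt α

open RelStruct in
/-- Every ideal of finite structures of signature `μ` that has the amalgamation
property and has at most ℵ₁ isomorphism types is representable. -/
theorem representable_of_amalgamation_aleph1 {I : Type} {μ : I → ℕ}
    (𝒜 : Set (RelStruct μ)) (h𝒜 : IsIdeal 𝒜) (hAP : AmalgamationProperty 𝒜)
    (hcard : numTypes 𝒜 ≤ Cardinal.aleph 1) :
    ∃ A : RelStruct μ, age A = 𝒜 := by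
  let ω₁ := (Cardinal.aleph 1).ord.ToType
  obtain ⟨B, hB𝒜, hB⟩ := exists_enum_of_numTypes_le (T := ω₁) h𝒜.1 (by
    rwa [Cardinal.mk_toType, Cardinal.card_ord, Cardinal.lift_aleph, Ordinal.lift_one])
  obtain ⟨C, hC, hC𝒜, hBC⟩ :=
    exists_monotone_chain (V := ω₁) countable_Iio_toType_ord_aleph_one h𝒜 hAP hB𝒜
  refine ⟨(iUnion C).toRelStruct, (age_iUnion_subset hC.directed_le hC𝒜).antisymm
    fun A hA => ⟨h𝒜.2.1 A hA, ?_⟩⟩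
  obtain ⟨α, hAα⟩ := hB A hA
  exact hAα.embeds.trans ((hBC α).trans (embeds_of_le (le_iUnion hC.directed_le α)))
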